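/- arXiv:2603.04009 — 2 statements merged into one kernel-verified Lean document; each statement's English description precedes it below -/
import Mathlib

section
/- Realizability of induction under the upper-bound interpretation: suppose realizers carry a preorder ⪯ with respect to which realizability of every formula is upward closed (a⃗ ⪯ b⃗ and a⃗ realizes A imply b⃗ realizes A), and there is a join operation a⃗ ∪ b⃗ giving an upper bound of both. If t⃗ realizes A(0) and φ⃗ realizes the induction step in the sense ∀m ∀n ≤ m ∀a⃗ (a⃗ realizes A(n) → φ⃗(m,a⃗) realizes A(n+1)), then the function ψ⃗ defined by primitive recursion ψ⃗(0)=t⃗ and ψ⃗(m)=ψ⃗(m−1) ∪ φ⃗(m−1,ψ⃗(m−1)) for m>0 satisfies: for all m and all n ≤ m, ψ⃗(m) realizes A(n). -/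
/-- Realizability of induction under the upper-bound (approximate)
interpretation `n ◁_ℕ m := n ≤ m`. Realizers `R` carry a preorder `≤` with respect to
which realizability is upward closed, and a join operation `un` giving upper bounds.
If `t` realizes `A(0)` and `φ` realizes the induction step in the sense
`∀m ∀n ≤ m ∀a (a realizes A(n) → φ(m,a) realizes A(n+1))`, then the primitive
recursively defined `ψ` with `ψ(0) = t`, `ψ(m+1) = ψ(m) ∪ φ(m, ψ(m))` satisfies:
for all `m` and all `n ≤ m`, `ψ(m)` realizes `A(n)`. -/
theorem induction_upper_bound_realizable {R : Type*} [Preorder R]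
    (un : R → R → R) (hle₁ : ∀ a b : R, a ≤ un a b) (hle₂ : ∀ a b : R, b ≤ un a b)
    (Rlz : ℕ → R → Prop)
    (hmono : ∀ (n : ℕ) (a b : R), a ≤ b → Rlz n a → Rlz n b)
    (t : R) (ht : Rlz 0 t)
    (φ : ℕ → R → R)
    (hφ : ∀ m : ℕ, ∀ n ≤ m, ∀ a : R, Rlz n a → Rlz (n + 1) (φ m a))
    (ψ : ℕ → R) (hψ0 : ψ 0 = t)
    (hψs : ∀ m : ℕ, ψ (m + 1) = un (ψ m) (φ m (ψ m))) :
    ∀ m : ℕ, ∀ n ≤ m, Rlz n (ψ m) := by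
  intro m
  induction m with
  | zero =>
    intro n hn
    interval_cases n
    rwa [hψ0]
  | succ m ih =>
    intro n hn
    rcases Nat.lt_or_ge n (m+1) with h | h
    · exact hmono n _ _ (hψs m ▸ hle₁ _ _) (ih n (Nat.lt_succ_iff.mp h))
    · have hn' : n = m + 1 := le_antisymm hn h
      subst hn'
      exact hmono _ _ _ (hψs m ▸ hle₂ _ _) (hφ m m le_rfl _ (ih m le_rfl))
end

section
/- Kleene-style characterization of qualified quantifiers under the precise interpretation of ℕ: with base interpretation ℕ◁(n,m) := (n=m) and equality interpreted uniformly, a pair (m, a⃗) uniformly realizes ∃n(ℕ(n) ∧ A(n)) iff a⃗ realizes A(m); and a⃗ uniformly realizes ∀n(ℕ(n) → A(n)) iff for all n, the partial application {a⃗}(n) is defined and realizes A(n). -/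
/-- Terms of the source language over function symbols `F` with arities `arF`. -/
inductive Tm (F : Type) (arF : F → ℕ) : Type
  | var : ℕ → Tm F arF
  | fn : (f : F) → (Fin (arF f) → Tm F arF) → Tm F arF

variable {F : Type} {arF : F → ℕ}

def Tm.rename (r : ℕ → ℕ) : Tm F arF → Tm F arF
  | .var n => .var (r n)
  | .fn f ts => .fn f (fun i => (ts i).rename r)

def Tm.subst (σ : ℕ → Tm F arF) : Tm F arF → Tm F arF
  | .var n => σ n
  | .fn f ts => .fn f (fun i => (ts i).subst σ)

/-- Lifting of a substitution under a binder (de Bruijn). -/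
def liftSubst (σ : ℕ → Tm F arF) : ℕ → Tm F arF
  | 0 => .var 0
  | n + 1 => (σ n).rename Nat.succ

/-- The substitution `[t/x]` for the bound variable `x = 0` (de Bruijn instantiation). -/
def subst1 (t : Tm F arF) : ℕ → Tm F arF
  | 0 => t
  | n + 1 => .var n

/-- First-order formulas over predicate symbols `P` (arities `arP`) and
function symbols `F` (arities `arF`), with de Bruijn quantifiers. -/
inductive Fm (P : Type) (arP : P → ℕ) (F : Type) (arF : F → ℕ) : Type
  | atom : (p : P) → (Fin (arP p) → Tm F arF) → Fm P arP F arF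
  | and : Fm P arP F arF → Fm P arP F arF → Fm P arP F arF
  | imp : Fm P arP F arF → Fm P arP F arF → Fm P arP F arF
  | ex : Fm P arP F arF → Fm P arP F arF
  | all : Fm P arP F arF → Fm P arP F arF

variable {P : Type} {arP : P → ℕ}

def Fm.subst (σ : ℕ → Tm F arF) : Fm P arP F arF → Fm P arP F arF
  | .atom p ts => .atom p (fun i => (ts i).subst σ)
  | .and A B => .and (A.subst σ) (B.subst σ)
  | .imp A B => .imp (A.subst σ) (B.subst σ)
  | .ex A => .ex (A.subst (liftSubst σ))
  | .all A => .all (A.subst (liftSubst σ))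

def Env.cons {D : Type} (d : D) (env : ℕ → D) : ℕ → D
  | 0 => d
  | n + 1 => env n

def Tm.eval {D : Type} (fint : (f : F) → (Fin (arF f) → D) → D) (env : ℕ → D) :
    Tm F arF → D
  | .var n => env n
  | .fn f ts => fint f (fun i => Tm.eval fint env (ts i))

variable {D : Type} (fint : (f : F) → (Fin (arF f) → D) → D)
variable {R : Type} (appR : R → R → Part R) (pfst psnd : R → R)
variable (base : (p : P) → (Fin (arP p) → D) → R → Prop)

/-- Uniform realizability: atoms via the base interpretation, conjunctions split the
realizer (via the projections `pfst`, `psnd`), implication uses partial application,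
and both quantifiers are interpreted uniformly. -/
def realize : Fm P arP F arF → (ℕ → D) → R → Prop
  | .atom p ts, env, a => base p (fun i => Tm.eval fint env (ts i)) a
  | .and A B, env, c =>
      realize A env (pfst c) ∧
      realize B env (psnd c)
  | .imp A B, env, f => ∀ a : R, realize A env a →
      ∃ h : (appR f a).Dom,
        realize B env ((appR f a).get h)
  | .ex A, env, a => ∃ d : D, realize A (Env.cons d env) a
  | .all A, env, a => ∀ d : D, realize A (Env.cons d env) a

/-- The qualified universal quantifier `∀x (P(x) → A(x))` (de Bruijn: `x = var 0`). -/
def qall (p₀ : P) (A : Fm P arP F arF) : Fm P arP F arF :=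
  .all (.imp (.atom p₀ fun _ => .var 0) A)

/-- The qualified existential quantifier `∃x (P(x) ∧ A(x))`. -/
def qex (p₀ : P) (A : Fm P arP F arF) : Fm P arP F arF :=
  .ex (.and (.atom p₀ fun _ => .var 0) A)


/-- Kleene application on Kleene's first algebra: `{e}(a)`. -/
def kleeneApp (e a : ℕ) : Part ℕ := (Denumerable.ofNat Nat.Partrec.Code e).eval a

/-- Kleene realizability (realizers are natural numbers, with partial
recursive application and pairing), base interpretation `ℕ◁(n,m) := n = m` for the
number predicate `p₀`: a pair `(m, a)` uniformly realizes `∃n(ℕ(n) ∧ A(n))` iff `a`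
realizes `A(m)`; and `a` uniformly realizes `∀n(ℕ(n) → A(n))` iff for all `n`, the
partial application `{a}(n)` is defined and realizes `A(n)`. -/
theorem kleene_qualified_quantifiers {F P : Type} {arF : F → ℕ} {arP : P → ℕ}
    (fint : (f : F) → (Fin (arF f) → ℕ) → ℕ)
    (base : (p : P) → (Fin (arP p) → ℕ) → ℕ → Prop)
    (p₀ : P) (hunary : arP p₀ = 1)
    (hbase : ∀ n m : ℕ, base p₀ (fun _ => n) m ↔ n = m)
    (A : Fm P arP F arF) (env : ℕ → ℕ) :
    (∀ c : ℕ,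
      realize fint kleeneApp (fun c => c.unpair.1) (fun c => c.unpair.2) base
          (qex p₀ A) env c ↔
        realize fint kleeneApp (fun c => c.unpair.1) (fun c => c.unpair.2) base
          A (Env.cons c.unpair.1 env) c.unpair.2) ∧
    (∀ a : ℕ,
      realize fint kleeneApp (fun c => c.unpair.1) (fun c => c.unpair.2) base
          (qall p₀ A) env a ↔
        ∀ n : ℕ, ∃ h : (kleeneApp a n).Dom,
          realize fint kleeneApp (fun c => c.unpair.1) (fun c => c.unpair.2) base
            A (Env.cons n env) ((kleeneApp a n).get h)) := by
  constructor
  · intro c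
    simp only [qex, realize]
    constructor
    · rintro ⟨d, hb, hA⟩
      rw [hbase] at hb
      simp only [Tm.eval, Env.cons] at hb
      rwa [hb] at hA
    · intro h
      exact ⟨c.unpair.1, (hbase _ _).mpr rfl, h⟩
  · intro a
    simp only [qall, realize]
    constructor
    · intro h n
      exact h n n ((hbase _ _).mpr rfl)
    · rintro h d a' hb
      rw [hbase] at hb
      simp only [Tm.eval, Env.cons] at hb
      subst hb
      exact h d
end
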